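/- arXiv:2112.01781 — 2 statements merged into one kernel-verified Lean document; each statement's English description precedes it below -/
import Mathlib

section
/- Let G = (V,E) be a finite simple graph, let I ⊆ V be a maximum independent set of G, and let k be an integer with k ≥ |V∖I|. Then the maximum of c(G,S) over all subsets S ⊆ V with |S| ≤ k equals α(G) = |I|. That is, under the budget k ≥ |V∖I|, the K-way vertex cut problem and the maximum independent set problem have the same optimal value. -/
/-!
Choosing one vertex in each component of `G - S` gives an independent set of `G`, so no vertex
cut produces more than `α(G)` components. Conversely, deleting the complement of a maximum
independent set `I` costs `|V ∖ I|` and leaves the edgeless graph on `I`, whose components are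
its `|I|` vertices.
-/

/-- The independence number `α(G)`: the maximum size of an independent set of `G`. -/
noncomputable def indepNum {V : Type*} [Fintype V] (G : SimpleGraph V) : ℕ :=
  sSup {n : ℕ | ∃ I : Finset V, (∀ u ∈ I, ∀ v ∈ I, u ≠ v → ¬ G.Adj u v) ∧ I.card = n}

theorem indepNum_eq_simpleGraph_indepNum {V : Type*} [Fintype V] (G : SimpleGraph V) :
    indepNum G = G.indepNum := by
  simp only [indepNum, SimpleGraph.indepNum, SimpleGraph.isNIndepSet_iff, SimpleGraph.IsIndepSet,
    Set.Pairwise, Finset.mem_coe]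

namespace SimpleGraph

variable {V : Type*} (G : SimpleGraph V)

theorem isIndepSet_range_out :
    G.IsIndepSet (Set.range fun c : G.ConnectedComponent => c.out) := by
  rintro _ ⟨c, rfl⟩ _ ⟨d, rfl⟩ hne hadj
  refine hne (congrArg Quot.out ?_)
  rw [← c.out_eq, ← d.out_eq]
  exact ConnectedComponent.sound hadj.reachable

theorem card_connectedComponent_le_indepNum [Finite V] :
    Nat.card G.ConnectedComponent ≤ G.indepNum := by
  have hinj : Function.Injective fun c : G.ConnectedComponent => c.out := fun c d h => by
    rw [← c.out_eq, ← d.out_eq]; exact congrArg _ h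
  have hfin := Set.toFinite (Set.range fun c : G.ConnectedComponent => c.out)
  calc Nat.card G.ConnectedComponent
      = Nat.card (Set.range fun c : G.ConnectedComponent => c.out) :=
        (Nat.card_range_of_injective hinj).symm
    _ = hfin.toFinset.card := by rw [Nat.card_eq_card_finite_toFinset]
    _ ≤ G.indepNum := IsIndepSet.card_le_indepNum (by simpa using G.isIndepSet_range_out)

theorem indepNum_induce_le [Finite V] (s : Set V) : (G.induce s).indepNum ≤ G.indepNum := by
  classical
  obtain ⟨t, ht⟩ := (G.induce s).exists_isNIndepSet_indepNum
  rw [← ht.card_eq, ← Finset.card_map (Function.Embedding.subtype _)]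
  refine IsIndepSet.card_le_indepNum ?_
  rintro _ hu _ hv hne
  simp only [Finset.coe_map, Set.mem_image, Finset.mem_coe, Function.Embedding.coe_subtype] at hu hv
  obtain ⟨u, hu, rfl⟩ := hu
  obtain ⟨v, hv, rfl⟩ := hv
  exact ht.isIndepSet hu hv (Subtype.coe_ne_coe.mp hne)

theorem induce_eq_bot_of_isIndepSet {s : Set V} (hs : G.IsIndepSet s) : G.induce s = ⊥ := by
  ext u v
  simp only [comap_adj, Function.Embedding.coe_subtype, bot_adj, iff_false]
  exact fun hadj => hs u.2 v.2 (G.ne_of_adj hadj) hadj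

theorem card_connectedComponent_bot :
    Nat.card (⊥ : SimpleGraph V).ConnectedComponent = Nat.card V :=
  (Nat.card_eq_of_bijective _
    ⟨fun _ _ h => reachable_bot.mp (ConnectedComponent.eq.mp h), Quot.exists_rep⟩).symm

end SimpleGraph

/-- If `I` is a maximum independent set of a finite simple graph `G` and
`k ≥ |V ∖ I|`, then the maximum of `c(G,S)` over all `S ⊆ V` with `|S| ≤ k` equals
`α(G) = |I|`: every such `S` yields at most `|I|` components and some such `S`
achieves exactly `|I|` components. -/
theorem kway_budget_eq_indepNum {V : Type*} [Fintype V] [DecidableEq V]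
    (G : SimpleGraph V) (I : Finset V)
    (hIindep : ∀ u ∈ I, ∀ v ∈ I, u ≠ v → ¬ G.Adj u v)
    (hImax : I.card = indepNum G)
    (k : ℕ) (hk : (Finset.univ \ I).card ≤ k) :
    (∀ S : Finset V, S.card ≤ k →
        Nat.card ((G.induce ((S : Set V)ᶜ)).ConnectedComponent) ≤ I.card) ∧
    (∃ S : Finset V, S.card ≤ k ∧
        Nat.card ((G.induce ((S : Set V)ᶜ)).ConnectedComponent) = I.card) := by
  refine ⟨fun S _ => ?_, Finset.univ \ I, hk, ?_⟩
  · rw [hImax, indepNum_eq_simpleGraph_indepNum]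
    exact (SimpleGraph.card_connectedComponent_le_indepNum _).trans (G.indepNum_induce_le _)
  · have hI : G.IsIndepSet I := hIindep
    have hcompl : ((Finset.univ \ I : Finset V) : Set V)ᶜ = I := by
      rw [Finset.coe_sdiff, Finset.coe_univ, ← Set.compl_eq_univ_sdiff, compl_compl]
    rw [hcompl, G.induce_eq_bot_of_isIndepSet hI, SimpleGraph.card_connectedComponent_bot,
      Nat.card_coe_set_eq, Set.ncard_coe_finset]
end

section
/- Let G = (V,E) be a split graph with vertex partition V = V1 ∪ V2 (V1 independent, V2 a clique), and fix an integer k with 0 ≤ k ≤ |V|. For a set S ⊆ V with |S| = k, S maximizes the number of connected components of G[V∖S] over all subsets of V of size k if and only if S minimizes the pairwise connectivity of G[V∖S] over all subsets of V of size k; moreover, both conditions are equivalent to S maximizing the number of isolated vertices of G[V∖S]. (Thus on split graphs, the K-way vertex cut problem and the critical node problem have the same optimal solutions.) -/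
/-- The number of connected components of the subgraph of `G` induced by the
complement of `S`, i.e. `c(G,S)`. -/
noncomputable def numComponents {V : Type*} (G : SimpleGraph V) (S : Finset V) : ℕ :=
  Nat.card ((G.induce ((S : Set V)ᶜ)).ConnectedComponent)

/-- The pairwise connectivity of a graph `H`: the number of unordered pairs of
distinct vertices lying in the same connected component. -/
noncomputable def pairwiseConnectivity {W : Type*} (H : SimpleGraph W) : ℕ :=
  Nat.card {p : Sym2 W // ¬ p.IsDiag ∧ ∀ a b, p = s(a, b) → H.Reachable a b}

/-- The number of isolated vertices (vertices with no neighbours) of a graph `H`. -/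
noncomputable def numIsolated {W : Type*} (H : SimpleGraph W) : ℕ :=
  Nat.card {v : W // ∀ w, ¬ H.Adj v w}

open SimpleGraph

section Aux

variable {W : Type*}

lemma aux_iso_reach {H : SimpleGraph W} {u v : W} (h : ∀ w, ¬ H.Adj u w)
    (hr : H.Reachable u v) : u = v := by
  obtain ⟨w⟩ := hr
  cases w with
  | nil => rfl
  | cons h' _ => exact absurd h' (h _)

lemma aux_reach_nonIso {H : SimpleGraph W} {u v : W} (hr : H.Reachable u v) (hne : u ≠ v) :
    ∃ w, H.Adj u w := by
  obtain ⟨w⟩ := hr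
  cases w with
  | nil => exact absurd rfl hne
  | cons h' _ => exact ⟨_, h'⟩

lemma aux_card_comp_all {H : SimpleGraph W} (hall : ∀ v w, ¬ H.Adj v w) :
    Nat.card H.ConnectedComponent = Nat.card W := by
  refine (Nat.card_congr (Equiv.ofBijective H.connectedComponentMk ⟨?_, ?_⟩)).symm
  · intro u v h
    exact aux_iso_reach (hall u) (SimpleGraph.ConnectedComponent.eq.mp h)
  · exact fun c => c.exists_rep

lemma aux_card_comp_ex [Finite W] {H : SimpleGraph W}
    (hP : ∀ u v : W, (∃ a, H.Adj u a) → (∃ b, H.Adj v b) → H.Reachable u v)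
    {v0 : W} (hv0 : ∃ a, H.Adj v0 a) :
    Nat.card H.ConnectedComponent = Nat.card {v : W // ∀ w, ¬ H.Adj v w} + 1 := by
  have e : Option {v : W // ∀ w, ¬ H.Adj v w} ≃ H.ConnectedComponent := by
    refine Equiv.ofBijective
      (fun o => o.elim (H.connectedComponentMk v0) (fun v => H.connectedComponentMk v.1)) ⟨?_, ?_⟩
    · rintro (_ | ⟨v, hv⟩) (_ | ⟨w, hw⟩) h
      · rfl
      · exact absurd ((aux_iso_reach hw (SimpleGraph.ConnectedComponent.eq.mp h.symm)).symm ▸ hv0)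
          (by simpa using hw)
      · exact absurd ((aux_iso_reach hv (SimpleGraph.ConnectedComponent.eq.mp h)).symm ▸ hv0)
          (by simpa using hv)
      · simp only [Option.elim] at h
        exact congrArg some
          (Subtype.ext (aux_iso_reach hv (SimpleGraph.ConnectedComponent.eq.mp h)))
    · intro c
      obtain ⟨u, rfl⟩ := c.exists_rep
      by_cases hu : ∀ w, ¬ H.Adj u w
      · exact ⟨some ⟨u, hu⟩, rfl⟩
      · push_neg at hu
        exact ⟨none, SimpleGraph.ConnectedComponent.eq.mpr (hP v0 u hv0 hu)⟩
  calc Nat.card H.ConnectedComponent = Nat.card (Option {v : W // ∀ w, ¬ H.Adj v w}) :=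
        (Nat.card_congr e).symm
    _ = _ := by
        classical
        letI := Fintype.ofFinite {v : W // ∀ w, ¬ H.Adj v w}
        simp [Nat.card_eq_fintype_card]

lemma aux_comp_formula [Finite W] (H : SimpleGraph W)
    (hP : ∀ u v : W, (∃ a, H.Adj u a) → (∃ b, H.Adj v b) → H.Reachable u v) :
    Nat.card H.ConnectedComponent =
      if Nat.card {v : W // ∃ w, H.Adj v w} = 0 then Nat.card W
      else Nat.card {v : W // ∀ w, ¬ H.Adj v w} + 1 := by
  by_cases hex : ∃ v, ∃ w, H.Adj v w
  · obtain ⟨v, hv⟩ := hex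
    rw [if_neg (by
      have : Nonempty {v : W // ∃ w, H.Adj v w} := ⟨⟨v, hv⟩⟩
      exact Nat.card_pos.ne')]
    exact aux_card_comp_ex hP hv
  · push_neg at hex
    rw [if_pos]
    · exact aux_card_comp_all hex
    · have : IsEmpty {v : W // ∃ w, H.Adj v w} :=
        ⟨fun x => by obtain ⟨v, w, hw⟩ := x; exact hex v w hw⟩
      exact Nat.card_of_isEmpty

lemma aux_pc_eq [Finite W] (H : SimpleGraph W)
    (hP : ∀ u v : W, (∃ a, H.Adj u a) → (∃ b, H.Adj v b) → H.Reachable u v) :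
    pairwiseConnectivity H = (Nat.card {v : W // ∃ w, H.Adj v w}).choose 2 := by
  classical
  letI := Fintype.ofFinite W
  set N := {v : W // ∃ w, H.Adj v w}
  have e : {p : Sym2 N // ¬ p.IsDiag} ≃
      {p : Sym2 W // ¬ p.IsDiag ∧ ∀ a b, p = s(a, b) → H.Reachable a b} := by
    refine Equiv.ofBijective (fun q => ⟨q.1.map Subtype.val, ?_⟩) ⟨?_, ?_⟩
    · obtain ⟨p, hp⟩ := q
      induction p with
      | _ x y =>
        rw [Sym2.mk_isDiag_iff] at hp
        refine ⟨?_, ?_⟩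
        · rw [Sym2.map_pair_eq, Sym2.mk_isDiag_iff]
          exact fun h => hp (Subtype.ext h)
        · intro a b hab
          rw [Sym2.map_pair_eq, Sym2.eq_iff] at hab
          rcases hab with ⟨rfl, rfl⟩ | ⟨rfl, rfl⟩
          · exact hP _ _ x.2 y.2
          · exact hP _ _ y.2 x.2
    · intro q q' h
      exact Subtype.ext (Sym2.map.injective Subtype.val_injective
        (congrArg Subtype.val h))
    · rintro ⟨p, hd, hr⟩
      induction p with
      | _ x y =>
        have hxy : x ≠ y := by rwa [Sym2.mk_isDiag_iff] at hd
        have hre : H.Reachable x y := hr x y rfl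
        have hx : ∃ w, H.Adj x w := aux_reach_nonIso hre hxy
        have hy : ∃ w, H.Adj y w := aux_reach_nonIso hre.symm (Ne.symm hxy)
        exact ⟨⟨s((⟨x, hx⟩ : N), (⟨y, hy⟩ : N)), by
          rw [Sym2.mk_isDiag_iff]; exact fun h => hxy (congrArg Subtype.val h)⟩,
          Subtype.ext (by simp [Sym2.map_pair_eq])⟩
  rw [pairwiseConnectivity, ← Nat.card_congr e, Nat.card_eq_fintype_card,
    Sym2.card_subtype_not_diag, Nat.card_eq_fintype_card]

lemma aux_choose2_strict {a b : ℕ} (h : a < b) (hb : 2 ≤ b) : a.choose 2 < b.choose 2 := by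
  obtain ⟨c, rfl⟩ : ∃ c, b = c + 1 := ⟨b - 1, by omega⟩
  have h1 : (c + 1).choose 2 = c.choose 1 + c.choose 2 := Nat.choose_succ_succ c 1
  have h2 : a.choose 2 ≤ c.choose 2 := Nat.choose_le_choose 2 (by omega)
  have h3 : c.choose 1 = c := Nat.choose_one_right c
  omega

lemma aux_core_p {n1 n2 : ℕ} (hn1 : n1 ≠ 1) (hn2 : n2 ≠ 1) :
    (n1.choose 2 ≤ n2.choose 2 ↔ n1 ≤ n2) := by
  constructor
  · intro h
    by_contra hlt
    push_neg at hlt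
    exact absurd h (not_le.mpr (aux_choose2_strict hlt (by omega)))
  · exact Nat.choose_le_choose 2

lemma aux_sum_card [Finite W] (H : SimpleGraph W) :
    Nat.card {v : W // ∀ w, ¬ H.Adj v w} + Nat.card {v : W // ∃ w, H.Adj v w} =
      Nat.card W := by
  classical
  letI := Fintype.ofFinite W
  have e : {v : W // ∃ w, H.Adj v w} ≃ {v : W // ¬ ∀ w, ¬ H.Adj v w} :=
    Equiv.subtypeEquivRight (by intro v; push_neg; rfl)
  simp only [Nat.card_eq_fintype_card]
  rw [Fintype.card_congr e, Fintype.card_subtype_compl]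
  have := Fintype.card_subtype_le (fun v : W => ∀ w, ¬ H.Adj v w)
  omega

lemma aux_n_ne_one [Finite W] (H : SimpleGraph W) :
    Nat.card {v : W // ∃ w, H.Adj v w} ≠ 1 := by
  intro h1
  rw [Nat.card_eq_one_iff_unique] at h1
  obtain ⟨hsub, ⟨⟨v, w, hw⟩⟩⟩ := h1
  have : (⟨v, w, hw⟩ : {v : W // ∃ w, H.Adj v w}) = ⟨w, v, hw.symm⟩ :=
    hsub.allEq _ _
  exact hw.ne (congrArg Subtype.val this)

end Aux

lemma aux_split_hP {V : Type*} [Fintype V] [DecidableEq V] (G : SimpleGraph V)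
    (V1 V2 : Finset V) (hpart : V1 ∪ V2 = Finset.univ)
    (hV1 : ∀ u ∈ V1, ∀ v ∈ V1, ¬ G.Adj u v)
    (hV2 : ∀ u ∈ V2, ∀ v ∈ V2, u ≠ v → G.Adj u v) (s : Set V) :
    ∀ u v : s, (∃ a, (G.induce s).Adj u a) → (∃ b, (G.induce s).Adj v b) →
      (G.induce s).Reachable u v := by
  have mem : ∀ x : V, x ∈ V1 ∨ x ∈ V2 := fun x => by
    have hx := Finset.mem_univ x
    rw [← hpart, Finset.mem_union] at hx
    exact hx
  have key : ∀ u : s, (∃ a, (G.induce s).Adj u a) →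
      ∃ u2 : s, ↑u2 ∈ V2 ∧ (G.induce s).Reachable u u2 := by
    rintro u ⟨a, ha⟩
    rcases mem u with h1 | h2
    · rcases mem a with ha1 | ha2
      · exact absurd (show G.Adj ↑u ↑a from ha) (hV1 _ h1 _ ha1)
      · exact ⟨a, ha2, ha.reachable⟩
    · exact ⟨u, h2, Reachable.refl _⟩
  intro u v hu hv
  obtain ⟨u2, hu2, hru⟩ := key u hu
  obtain ⟨v2, hv2, hrv⟩ := key v hv
  have h22 : (G.induce s).Reachable u2 v2 := by
    by_cases h : u2 = v2
    · rw [h]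
    · exact SimpleGraph.Adj.reachable
        (show G.Adj ↑u2 ↑v2 from hV2 _ hu2 _ hv2 fun he => h (Subtype.ext he))
  exact hru.trans (h22.trans hrv.symm)

lemma aux_card_compl {V : Type*} [Fintype V] [DecidableEq V] (T : Finset V) (k : ℕ)
    (hT : T.card = k) : Nat.card ↥((T : Set V)ᶜ) = Fintype.card V - k := by
  classical
  letI := Fintype.ofFinite ↥((T : Set V)ᶜ)
  rw [Nat.card_eq_fintype_card]
  have e : ↥((T : Set V)ᶜ) ≃ {x : V // ¬ x ∈ T} :=
    Equiv.subtypeEquivRight (by simp)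
  rw [Fintype.card_congr e, Fintype.card_subtype_compl]
  simp [hT]

/-- On a split graph `G` with partition `V = V1 ∪ V2` (`V1`
independent, `V2` a clique), for a fixed budget `k ≤ |V|` and any `S` of size `k`:
`S` maximizes the number of connected components of `G[V ∖ S]` over all size-`k`
subsets iff `S` minimizes the pairwise connectivity of `G[V ∖ S]` over all size-`k`
subsets, and both are equivalent to `S` maximizing the number of isolated vertices
of `G[V ∖ S]`. Thus on split graphs the K-way vertex cut problem and the critical
node problem have the same optimal solutions. -/
theorem split_kway_iff_cnp {V : Type*} [Fintype V] [DecidableEq V] (G : SimpleGraph V)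
    (V1 V2 : Finset V)
    (hpart : V1 ∪ V2 = Finset.univ) (hdisj : Disjoint V1 V2)
    (hV1 : ∀ u ∈ V1, ∀ v ∈ V1, ¬ G.Adj u v)
    (hV2 : ∀ u ∈ V2, ∀ v ∈ V2, u ≠ v → G.Adj u v)
    (k : ℕ) (hk : k ≤ Fintype.card V)
    (S : Finset V) (hS : S.card = k) :
    ((∀ T : Finset V, T.card = k → numComponents G T ≤ numComponents G S) ↔
      (∀ T : Finset V, T.card = k →
        pairwiseConnectivity (G.induce ((S : Set V)ᶜ)) ≤
          pairwiseConnectivity (G.induce ((T : Set V)ᶜ)))) ∧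
    ((∀ T : Finset V, T.card = k → numComponents G T ≤ numComponents G S) ↔
      (∀ T : Finset V, T.card = k →
        numIsolated (G.induce ((T : Set V)ᶜ)) ≤
          numIsolated (G.induce ((S : Set V)ᶜ)))) := by
  classical
  have hP : ∀ T : Finset V, ∀ u v : ↥((T : Set V)ᶜ),
      (∃ a, (G.induce ((T : Set V)ᶜ)).Adj u a) →
      (∃ b, (G.induce ((T : Set V)ᶜ)).Adj v b) →
      (G.induce ((T : Set V)ᶜ)).Reachable u v :=
    fun T => aux_split_hP G V1 V2 hpart hV1 hV2 _
  have key : ∀ T : Finset V, T.card = k →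
      ((numComponents G T ≤ numComponents G S ↔
        numIsolated (G.induce ((T : Set V)ᶜ)) ≤ numIsolated (G.induce ((S : Set V)ᶜ))) ∧
       (pairwiseConnectivity (G.induce ((S : Set V)ᶜ)) ≤
          pairwiseConnectivity (G.induce ((T : Set V)ᶜ)) ↔
        numIsolated (G.induce ((T : Set V)ᶜ)) ≤ numIsolated (G.induce ((S : Set V)ᶜ)))) := by
    intro T hT
    set HT := G.induce ((T : Set V)ᶜ) with hHT
    set HS := G.induce ((S : Set V)ᶜ) with hHS
    set iT := numIsolated HT with hiT
    set iS := numIsolated HS with hiS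
    set nT := Nat.card {v : ↥((T : Set V)ᶜ) // ∃ w, HT.Adj v w} with hnT
    set nS := Nat.card {v : ↥((S : Set V)ᶜ) // ∃ w, HS.Adj v w} with hnS
    have hsumT : iT + nT = Fintype.card V - k := by
      rw [hiT, numIsolated, aux_sum_card HT, aux_card_compl T k hT]
    have hsumS : iS + nS = Fintype.card V - k := by
      rw [hiS, numIsolated, aux_sum_card HS, aux_card_compl S k hS]
    have hneT : nT ≠ 1 := aux_n_ne_one HT
    have hneS : nS ≠ 1 := aux_n_ne_one HS
    have hcT : numComponents G T = if nT = 0 then Fintype.card V - k else iT + 1 := by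
      rw [numComponents, aux_comp_formula HT (hP T), aux_card_compl T k hT]; rfl
    have hcS : numComponents G S = if nS = 0 then Fintype.card V - k else iS + 1 := by
      rw [numComponents, aux_comp_formula HS (hP S), aux_card_compl S k hS]; rfl
    have hpT : pairwiseConnectivity HT = nT.choose 2 := aux_pc_eq HT (hP T)
    have hpS : pairwiseConnectivity HS = nS.choose 2 := aux_pc_eq HS (hP S)
    constructor
    · rw [hcT, hcS]
      split_ifs <;> omega
    · rw [hpT, hpS, aux_core_p hneS hneT]
      omega
  refine ⟨⟨fun h T hT => ((key T hT).2).mpr (((key T hT).1).mp (h T hT)),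
      fun h T hT => ((key T hT).1).mpr (((key T hT).2).mp (h T hT))⟩,
    ⟨fun h T hT => ((key T hT).1).mp (h T hT),
      fun h T hT => ((key T hT).1).mpr (h T hT)⟩⟩
end
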